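/- Let α > 0, let t(x) = α‖x‖² for x ∈ ℝⁿ (with the Euclidean norm), let T = {(x, α‖x‖²) : x ∈ ℝⁿ} ⊆ ℝⁿ × ℝ (with the Euclidean product distance), and let (x̄, ȳ) ∈ ℝⁿ × ℝ with x̄ ≠ 0 and ȳ ≠ α‖x̄‖². Set Δ := (1 − 2αȳ)³/(216α⁶) + ‖x̄‖²/(16α⁴). If Δ ≥ 0, then the set of points of T nearest to (x̄, ȳ) is the singleton {(w₁·x̄/‖x̄‖, α·w₁²)}, where w₁ := ∛(‖x̄‖/(4α²) − √Δ) + ∛(‖x̄‖/(4α²) + √Δ), with ∛ denoting the real cube root. -/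

import Mathlib

/-!
Write `N = ‖x̄‖`, `B = 1 - 2αȳ`. Over the point `r • x̄ / N` of the ray of `x̄`, the squared
distance to the graph is `f r = (N - r)² + (ȳ - αr²)²`, and if `2α²w³ + Bw = N` then
`f r - f w = (r - w)² (α²(r + w)² + 2α²w² + B)`. That cubic is `w³ + pw + q = 0` with
`p = B / (2α²)`, `q = -N / (2α²)` and discriminant `(q/2)² + (p/3)³ = Δ`, so for `Δ ≥ 0`
Cardano's formula gives the root `w₁ = u + v`; moreover `w₁² + p = u² - uv + v² > 0`, so `f` has a
strict global minimum at `w₁`. Leaving the ray of `x̄` strictly increases `‖x̄ - x‖` at fixed `‖x‖`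
(the space is strictly convex), so `(w₁ x̄ / N, αw₁²)` is the unique nearest point.
-/

/-- The real cube root. -/
noncomputable def cbrt (t : ℝ) : ℝ := Real.sign t * |t| ^ ((1 : ℝ) / 3)

lemma cbrt_pow_three (t : ℝ) : cbrt t ^ 3 = t := by
  have habs : (|t| ^ ((1 : ℝ) / 3)) ^ 3 = |t| := by
    rw [← Real.rpow_natCast, ← Real.rpow_mul (abs_nonneg t)]
    norm_num
  rcases lt_trichotomy t 0 with h | rfl | h
  · rw [cbrt, mul_pow, habs, Real.sign_of_neg h, abs_of_neg h]; ring
  · simp [cbrt]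
  · rw [cbrt, mul_pow, habs, Real.sign_of_pos h, abs_of_pos h]; ring

/-- Cardano's formula for a real root of `w³ + p w + q = 0`, meaningful when
`(q/2)² + (p/3)³ ≥ 0`. -/
noncomputable def cardanoRoot (p q : ℝ) : ℝ :=
  cbrt (-q / 2 - √((q / 2) ^ 2 + (p / 3) ^ 3)) + cbrt (-q / 2 + √((q / 2) ^ 2 + (p / 3) ^ 3))

section Cardano

variable {p q : ℝ}

lemma cbrt_mul_cbrt_cardano (hD : 0 ≤ (q / 2) ^ 2 + (p / 3) ^ 3) :
    cbrt (-q / 2 - √((q / 2) ^ 2 + (p / 3) ^ 3)) * cbrt (-q / 2 + √((q / 2) ^ 2 + (p / 3) ^ 3))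
      = -(p / 3) := by
  apply (Odd.strictMono_pow (R := ℝ) (by decide : Odd 3)).injective
  have hs := Real.sq_sqrt hD
  simp only [mul_pow, cbrt_pow_three]
  linear_combination -hs

theorem cardanoRoot_cubic (hD : 0 ≤ (q / 2) ^ 2 + (p / 3) ^ 3) :
    cardanoRoot p q ^ 3 + p * cardanoRoot p q + q = 0 := by
  have huv := cbrt_mul_cbrt_cardano hD
  rw [cardanoRoot]
  set s := √((q / 2) ^ 2 + (p / 3) ^ 3)
  linear_combination cbrt_pow_three (-q / 2 - s) + cbrt_pow_three (-q / 2 + s)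
    + 3 * (cbrt (-q / 2 - s) + cbrt (-q / 2 + s)) * huv

theorem cardanoRoot_sq_add_pos (hD : 0 ≤ (q / 2) ^ 2 + (p / 3) ^ 3) (hq : q ≠ 0) :
    0 < cardanoRoot p q ^ 2 + p := by
  have huv := cbrt_mul_cbrt_cardano hD
  rw [cardanoRoot]
  set s := √((q / 2) ^ 2 + (p / 3) ^ 3)
  set u := cbrt (-q / 2 - s)
  set v := cbrt (-q / 2 + s)
  have hne : u ≠ 0 ∨ v ≠ 0 := by
    by_contra! h
    have hu : u ^ 3 = -q / 2 - s := cbrt_pow_three _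
    have hv : v ^ 3 = -q / 2 + s := cbrt_pow_three _
    rw [h.1] at hu
    rw [h.2] at hv
    exact hq (by linarith)
  have hquad : 0 < u ^ 2 - u * v + v ^ 2 := by
    rcases hne with h | h
    · nlinarith [sq_nonneg (2 * v - u), sq_pos_of_ne_zero h]
    · nlinarith [sq_nonneg (2 * u - v), sq_pos_of_ne_zero h]
  linear_combination hquad - 3 * huv

end Cardano

/-- Cardano's formula, rewritten for the cubic `2α²w³ + Bw = N`, where `p = B / (2α²)` and
`q = -N / (2α²)`. -/
theorem cardano_stationary {α B N Δ w : ℝ} (hα : α ≠ 0) (hN : N ≠ 0)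
    (hΔ : Δ = B ^ 3 / (216 * α ^ 6) + N ^ 2 / (16 * α ^ 4)) (hΔ0 : 0 ≤ Δ)
    (hw : w = cbrt (N / (4 * α ^ 2) - √Δ) + cbrt (N / (4 * α ^ 2) + √Δ)) :
    2 * α ^ 2 * w ^ 3 + B * w = N ∧ 0 < 2 * α ^ 2 * w ^ 2 + B := by
  have hα2 : 0 < 2 * α ^ 2 := by positivity
  obtain ⟨p, rfl⟩ : ∃ p, B = 2 * α ^ 2 * p := ⟨B / (2 * α ^ 2), by field_simp⟩
  obtain ⟨q, rfl⟩ : ∃ q, N = -(2 * α ^ 2 * q) := ⟨-N / (2 * α ^ 2), by field_simp⟩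
  have hq0 : q ≠ 0 := by rintro rfl; simp at hN
  have hD : Δ = (q / 2) ^ 2 + (p / 3) ^ 3 := by rw [hΔ]; field_simp; ring
  have hm : -(2 * α ^ 2 * q) / (4 * α ^ 2) = -q / 2 := by field_simp; ring
  rw [hm, hD, ← cardanoRoot] at hw
  rw [hD] at hΔ0
  subst hw
  constructor
  · linear_combination 2 * α ^ 2 * cardanoRoot_cubic hΔ0
  · linear_combination mul_pos hα2 (cardanoRoot_sq_add_pos hΔ0 hq0)

section GraphDistance

variable {α y N w : ℝ}

/-- `f r = (N - r)² + (y - αr²)²` is the squared distance from `(x̄, y)` to the graph point over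
`r • x̄ / ‖x̄‖`, and `2α²w³ + (1 - 2αy)w = N` says that `f' w = 0`. -/
lemma sq_dist_radial_sub (hw : 2 * α ^ 2 * w ^ 3 + (1 - 2 * α * y) * w = N) (r : ℝ) :
    ((N - r) ^ 2 + (y - α * r ^ 2) ^ 2) - ((N - w) ^ 2 + (y - α * w ^ 2) ^ 2)
      = (r - w) ^ 2 * (α ^ 2 * (r + w) ^ 2 + (2 * α ^ 2 * w ^ 2 + (1 - 2 * α * y))) := by
  linear_combination (2 * (r - w)) * hw

lemma sq_dist_radial_lt (hw : 2 * α ^ 2 * w ^ 3 + (1 - 2 * α * y) * w = N)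
    (hpos : 0 < 2 * α ^ 2 * w ^ 2 + (1 - 2 * α * y)) {r : ℝ} (hr : r ≠ w) :
    (N - w) ^ 2 + (y - α * w ^ 2) ^ 2 < (N - r) ^ 2 + (y - α * r ^ 2) ^ 2 := by
  have hsq : 0 < (r - w) ^ 2 := by positivity [sub_ne_zero.2 hr]
  have := sq_dist_radial_sub hw r
  linarith [mul_pos hsq (add_pos_of_nonneg_of_pos (by positivity : 0 ≤ α ^ 2 * (r + w) ^ 2) hpos)]

lemma pos_of_stationary (hw : 2 * α ^ 2 * w ^ 3 + (1 - 2 * α * y) * w = N)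
    (hpos : 0 < 2 * α ^ 2 * w ^ 2 + (1 - 2 * α * y)) (hN : 0 < N) : 0 < w :=
  pos_of_mul_pos_right (by rw [← hw] at hN; linear_combination hN) hpos.le

variable {E : Type*} [NormedAddCommGroup E] [NormedSpace ℝ E] {xb x : E}

lemma norm_div_norm_smul (hxb : xb ≠ 0) (hw : 0 ≤ w) : ‖(w / ‖xb‖) • xb‖ = w := by
  rw [norm_smul, Real.norm_of_nonneg (by positivity), div_mul_cancel₀ _ (norm_ne_zero_iff.2 hxb)]

variable [StrictConvexSpace ℝ E]

theorem sq_dist_graph_lt (hxb : xb ≠ 0)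
    (hw : 2 * α ^ 2 * w ^ 3 + (1 - 2 * α * y) * w = ‖xb‖)
    (hpos : 0 < 2 * α ^ 2 * w ^ 2 + (1 - 2 * α * y)) (hx : x ≠ (w / ‖xb‖) • xb) :
    ‖xb - (w / ‖xb‖) • xb‖ ^ 2 + (y - α * w ^ 2) ^ 2 < ‖xb - x‖ ^ 2 + (y - α * ‖x‖ ^ 2) ^ 2 := by
  have hw0 := pos_of_stationary hw hpos (norm_pos_iff.2 hxb)
  have hnorm := norm_div_norm_smul hxb hw0.le
  have hray : SameRay ℝ xb ((w / ‖xb‖) • xb) := SameRay.sameRay_nonneg_smul_right xb (by positivity)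
  rw [hray.norm_sub, hnorm, sq_abs]
  by_cases hr : ‖x‖ = w
  · have hx' : ¬SameRay ℝ xb x := fun h => hx (norm_injOn_ray_left hxb h hray (hr.trans hnorm.symm))
    have hlt := not_sameRay_iff_abs_lt_norm_sub.1 hx'
    have := sq_lt_sq' (neg_lt_of_abs_lt hlt) (lt_of_abs_lt hlt)
    rw [hr] at this ⊢
    linarith
  · have hle := abs_norm_sub_norm_le xb x
    have := sq_le_sq' (neg_le_of_abs_le hle) (le_of_abs_le hle)
    linarith [sq_dist_radial_lt hw hpos hr]

end GraphDistance

theorem stmt_18_general (n : ℕ) (α : ℝ) (hα : 0 < α)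
    (xb : EuclideanSpace ℝ (Fin n)) (yb : ℝ) (hx : xb ≠ 0)
    (Δ w₁ : ℝ)
    (hΔ : Δ = (1 - 2 * α * yb) ^ 3 / (216 * α ^ 6) + ‖xb‖ ^ 2 / (16 * α ^ 4))
    (hw₁ : w₁ = cbrt (‖xb‖ / (4 * α ^ 2) - Real.sqrt Δ)
        + cbrt (‖xb‖ / (4 * α ^ 2) + Real.sqrt Δ))
    (hcase : 0 ≤ Δ) :
    {z : EuclideanSpace ℝ (Fin n) × ℝ |
        (∃ x : EuclideanSpace ℝ (Fin n), z = (x, α * ‖x‖ ^ 2)) ∧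
        ∀ w : EuclideanSpace ℝ (Fin n),
          Real.sqrt (‖xb - z.1‖ ^ 2 + (yb - z.2) ^ 2) ≤
            Real.sqrt (‖xb - w‖ ^ 2 + (yb - α * ‖w‖ ^ 2) ^ 2)} =
      {((w₁ / ‖xb‖) • xb, α * w₁ ^ 2)} := by
  have hN : 0 < ‖xb‖ := norm_pos_iff.2 hx
  obtain ⟨hcubic, hpos⟩ := cardano_stationary hα.ne' hN.ne' hΔ hcase hw₁
  have hnorm := norm_div_norm_smul hx (pos_of_stationary hcubic hpos hN).le
  ext z
  simp only [Set.mem_ofPred_eq, Set.mem_singleton_iff]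
  constructor
  · rintro ⟨⟨x, rfl⟩, hmin⟩
    by_contra hne
    have hx' : x ≠ (w₁ / ‖xb‖) • xb := fun h => hne (by rw [h, hnorm])
    have := hmin ((w₁ / ‖xb‖) • xb)
    rw [hnorm] at this
    exact this.not_gt (Real.sqrt_lt_sqrt (by positivity) (sq_dist_graph_lt hx hcubic hpos hx'))
  · rintro rfl
    refine ⟨⟨_, by rw [hnorm]⟩, fun x => Real.sqrt_le_sqrt ?_⟩
    rcases eq_or_ne x ((w₁ / ‖xb‖) • xb) with rfl | hx'
    · rw [hnorm]
    · exact (sq_dist_graph_lt hx hcubic hpos hx').le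

/-- projection of `(x̄, ȳ)` (with `x̄ ≠ 0`, `ȳ ≠ α‖x̄‖²`) onto the
graph of `t(x) = α‖x‖²` when `Δ ≥ 0`: the singleton `{(w₁·x̄/‖x̄‖, αw₁²)}`. -/
theorem stmt_18 (n : ℕ) (α : ℝ) (hα : 0 < α)
    (xb : EuclideanSpace ℝ (Fin n)) (yb : ℝ) (hx : xb ≠ 0)
    (hy : yb ≠ α * ‖xb‖ ^ 2) (Δ w₁ : ℝ)
    (hΔ : Δ = (1 - 2 * α * yb) ^ 3 / (216 * α ^ 6) + ‖xb‖ ^ 2 / (16 * α ^ 4))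
    (hw₁ : w₁ = cbrt (‖xb‖ / (4 * α ^ 2) - Real.sqrt Δ)
        + cbrt (‖xb‖ / (4 * α ^ 2) + Real.sqrt Δ))
    (hcase : 0 ≤ Δ) :
    {z : EuclideanSpace ℝ (Fin n) × ℝ |
        (∃ x : EuclideanSpace ℝ (Fin n), z = (x, α * ‖x‖ ^ 2)) ∧
        ∀ w : EuclideanSpace ℝ (Fin n),
          Real.sqrt (‖xb - z.1‖ ^ 2 + (yb - z.2) ^ 2) ≤
            Real.sqrt (‖xb - w‖ ^ 2 + (yb - α * ‖w‖ ^ 2) ^ 2)} =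
      {((w₁ / ‖xb‖) • xb, α * w₁ ^ 2)} :=
  stmt_18_general n α hα xb yb hx Δ w₁ hΔ hw₁ hcase
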